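/- arXiv:1309.0686 — 2 statements merged into one kernel-verified Lean document; each statement's English description precedes it below -/
import Mathlib

section
/- Let p : E → G be a surjective group homomorphism with kernel K, and suppose the extension 1 → K → E → G → 1 abelianizes well, i.e., the image of the commutator subgroup [K,K] under the inclusion K → E equals K ∩ [E,E] (equivalently, 0 → K_ab → E_ab → G_ab → 0 is exact). Then for every group homomorphism f : H → G, the pullback extension also abelianizes well: letting P = {(e,h) ∈ E × H : p(e) = f(h)} with projection π : P → H (surjective with kernel K' = {(k,1) : k ∈ K}), the image of [K',K'] under the inclusion K' → P equals K' ∩ [P,P]. In other words, abelianization is conditionally flat. -/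
/-!
The first projection `P → E` restricts to an isomorphism from the kernel `K' = K × 1` of the
pulled-back extension onto `K`, and it maps `[P,P]` into `[E,E]`. So an element of
`K' ∩ [P,P]` lands in `K ∩ [E,E] = [K,K]`, and pulling back through the isomorphism puts it
in `[K',K']`.
-/

/-- The pullback (fiber product) of two homomorphisms `p : E →* G` and `f : H →* G`,
as a subgroup of `E × H`. -/
def pullbackSubgroup {E H G : Type*} [Group E] [Group H] [Group G]
    (p : E →* G) (f : H →* G) : Subgroup (E × H) where
  carrier := {q : E × H | p q.1 = f q.2}
  one_mem' := by simp
  mul_mem' := by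
    intro a b ha hb
    simp only [Set.mem_setOf_eq, Prod.fst_mul, Prod.snd_mul, map_mul] at *
    rw [ha, hb]
  inv_mem' := by
    intro a ha
    simp only [Set.mem_setOf_eq, Prod.fst_inv, Prod.snd_inv, map_inv] at *
    rw [ha]

/-- The projection from the pullback of `p : E →* G` along `f : H →* G` to `H`. -/
def pullbackProj {E H G : Type*} [Group E] [Group H] [Group G]
    (p : E →* G) (f : H →* G) : ↥(pullbackSubgroup p f) →* H :=
  (MonoidHom.snd E H).comp (pullbackSubgroup p f).subtype

namespace Subgroup

variable {P E : Type*} [Group P] [Group E]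

lemma map_commutator_le (φ : P →* E) : (_root_.commutator P).map φ ≤ _root_.commutator E := by
  rw [map_commutator_eq]
  exact commutator_mono le_top le_top

theorem commutator_eq_inf_of_mulEquiv {N : Subgroup P} {K : Subgroup E} (φ : P →* E)
    (e : N ≃* K) (he : ∀ n : N, (e n : E) = φ n) (hK : ⁅K, K⁆ = K ⊓ _root_.commutator E) :
    ⁅N, N⁆ = N ⊓ _root_.commutator P := by
  refine le_antisymm (le_inf N.commutator_le_self (commutator_mono le_top le_top)) ?_
  rintro x ⟨hxN, hxP⟩
  have hφx : φ x ∈ ⁅K, K⁆ :=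
    hK ▸ ⟨he ⟨x, hxN⟩ ▸ (e ⟨x, hxN⟩).2, map_commutator_le φ ⟨x, hxP, rfl⟩⟩
  rw [← K.map_subtype_commutator] at hφx
  obtain ⟨c, hc, hcx⟩ := hφx
  have hce : c = e ⟨x, hxN⟩ := Subtype.ext (hcx.trans (he ⟨x, hxN⟩).symm)
  have hx : (⟨x, hxN⟩ : N) ∈ _root_.commutator N := by
    rw [← e.symm_apply_apply ⟨x, hxN⟩, ← hce]
    exact map_commutator_le e.symm.toMonoidHom ⟨c, hc, rfl⟩
  rw [← N.map_subtype_commutator]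
  exact ⟨_, hx, rfl⟩

end Subgroup

def kerPullbackProjEquiv {E G H : Type*} [Group E] [Group G] [Group H] (p : E →* G) (f : H →* G) :
    (pullbackProj p f).ker ≃* p.ker where
  toFun x := ⟨x.1.1.1, by
    have hx : p x.1.1.1 = f x.1.1.2 := x.1.2
    rw [MonoidHom.mem_ker, hx, show x.1.1.2 = 1 from x.2, map_one]⟩
  invFun k := ⟨⟨(k, 1), by simpa [pullbackSubgroup] using p.mem_ker.mp k.2⟩, rfl⟩
  left_inv x := by ext; exacts [rfl, x.2.symm]
  right_inv _ := rfl
  map_mul' _ _ := rfl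

theorem abelianization_conditionally_flat_general
    {E G H : Type*} [Group E] [Group G] [Group H]
    (p : E →* G)
    (hflat : (commutator ↥(MonoidHom.ker p)).map (MonoidHom.ker p).subtype =
      MonoidHom.ker p ⊓ commutator E)
    (f : H →* G) :
    (commutator ↥(MonoidHom.ker (pullbackProj p f))).map
        (MonoidHom.ker (pullbackProj p f)).subtype =
      MonoidHom.ker (pullbackProj p f) ⊓ commutator ↥(pullbackSubgroup p f) := by
  rw [Subgroup.map_subtype_commutator] at hflat ⊢
  exact Subgroup.commutator_eq_inf_of_mulEquiv
    ((MonoidHom.fst E H).comp (pullbackSubgroup p f).subtype) (kerPullbackProjEquiv p f)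
    (fun _ => rfl) hflat

/-- If a group extension `1 → K → E → G → 1` abelianizes well, i.e. the image of `[K,K]`
in `E` equals `K ⊓ [E,E]`, then the pullback extension along any homomorphism `f : H →* G`
also abelianizes well: abelianization is conditionally flat. -/
theorem abelianization_conditionally_flat
    {E G H : Type*} [Group E] [Group G] [Group H]
    (p : E →* G) (hp : Function.Surjective p)
    (hflat : (commutator ↥(MonoidHom.ker p)).map (MonoidHom.ker p).subtype =
      MonoidHom.ker p ⊓ commutator E)
    (f : H →* G) :
    (commutator ↥(MonoidHom.ker (pullbackProj p f))).map
        (MonoidHom.ker (pullbackProj p f)).subtype =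
      MonoidHom.ker (pullbackProj p f) ⊓ commutator ↥(pullbackSubgroup p f) :=
  abelianization_conditionally_flat_general p hflat f
end

section
/- Let F be a functor from the category of groups to itself which is right exact, meaning: for every surjective group homomorphism p : E → G with kernel inclusion i : K → E, the homomorphism F(p) : F(E) → F(G) is surjective and its kernel equals the range of F(i) : F(K) → F(E). Then F is conditionally flat: if an extension 1 → K → E → G → 1 is F-flat (i.e., additionally F(i) is injective, so that 1 → F(K) → F(E) → F(G) → 1 is a group extension), then for every group homomorphism f : H → G the pullback extension 1 → K' → P → H → 1, where P = {(e,h) ∈ E × H : p(e) = f(h)} with projection to H and kernel K' = {(k,1) : k ∈ K}, is also F-flat. -/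
open CategoryTheory

universe u

/-- The inclusion of the kernel of a morphism of groups, as a morphism in `Grp`. -/
def kerIncl {E G : GrpCat.{u}} (p : E ⟶ G) : GrpCat.of ↥(MonoidHom.ker p.hom) ⟶ E :=
  GrpCat.ofHom (MonoidHom.ker p.hom).subtype

/-- The projection of the pullback of `p : E ⟶ G` along `f : H ⟶ G`, as a morphism
in `Grp`. -/
def pbHom {E H G : GrpCat.{u}} (p : E ⟶ G) (f : H ⟶ G) :
    GrpCat.of ↥(pullbackSubgroup p.hom f.hom) ⟶ H :=
  GrpCat.ofHom (pullbackProj p.hom f.hom)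

/-- An extension `1 → ker p → E → G → 1` is `F`-flat for a functor `F : Grp ⥤ Grp` if
applying `F` to the kernel inclusion and to `p` yields again a group extension:
`F` of the kernel inclusion is injective, `F p` is surjective, and the image of the former
is the kernel of the latter. -/
def GrpFlat (F : GrpCat.{u} ⥤ GrpCat.{u}) {E G : GrpCat.{u}} (p : E ⟶ G) : Prop :=
  Function.Injective (F.map (kerIncl p)).hom ∧
  Function.Surjective (F.map p).hom ∧
  MonoidHom.range (F.map (kerIncl p)).hom = MonoidHom.ker (F.map p).hom

/-- A functor `F : Grp ⥤ Grp` is right exact if, for every surjective `p : E ⟶ G` with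
kernel inclusion `i`, the morphism `F p` is surjective and its kernel is the range
of `F i`. -/
def GrpRightExact (F : GrpCat.{u} ⥤ GrpCat.{u}) : Prop :=
  ∀ (E G : GrpCat.{u}) (p : E ⟶ G), Function.Surjective p.hom →
    Function.Surjective (F.map p).hom ∧
    MonoidHom.range (F.map (kerIncl p)).hom = MonoidHom.ker (F.map p).hom

/-!
Right exactness already makes the pulled-back extension `K' → P → H` right exact after `F`;
only injectivity of `F(K' → P)` is at stake. The first projection `P → E` carries `K'`
isomorphically onto `K`, so `F(K' → P)` followed by `F(P → E)` is an isomorphism followed by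
the injective `F(K → E)`.
-/

section Pullback

variable {E H G : Type*} [Group E] [Group H] [Group G] (p : E →* G) (f : H →* G)

def pullbackFst : ↥(pullbackSubgroup p f) →* E :=
  (MonoidHom.fst E H).comp (pullbackSubgroup p f).subtype

theorem pullbackProj_surjective (hp : Function.Surjective p) :
    Function.Surjective (pullbackProj p f) := fun h ↦
  let ⟨e, he⟩ := hp (f h)
  ⟨⟨(e, h), he⟩, rfl⟩

def pullbackProjKerEquiv : ↥(pullbackProj p f).ker ≃* ↥p.ker where
  toFun x := ⟨x.1.1.1, by
    have hx : p x.1.1.1 = f x.1.1.2 := x.1.2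
    have h1 : x.1.1.2 = 1 := x.2
    rw [MonoidHom.mem_ker, hx, h1, map_one]⟩
  invFun k := ⟨⟨(k.1, 1), show p k.1 = f 1 by rw [map_one]; exact k.2⟩, rfl⟩
  left_inv x := Subtype.ext <| Subtype.ext <| Prod.ext rfl (x.2 : x.1.1.2 = 1).symm
  right_inv _ := rfl
  map_mul' _ _ := rfl

end Pullback

theorem injective_map_of_comp_eq_iso_comp {𝒞 : Type*} [Category 𝒞] (F : 𝒞 ⥤ GrpCat.{u})
    {A B C D : 𝒞} {g : A ⟶ B} {π : B ⟶ D} (e : A ≅ C) {k : C ⟶ D}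
    (w : g ≫ π = e.hom ≫ k) (hk : Function.Injective (F.map k).hom) :
    Function.Injective (F.map g).hom := by
  have hcomp : Function.Injective (F.map (g ≫ π)).hom := by
    rw [w, F.map_comp, GrpCat.hom_comp, MonoidHom.coe_comp]
    exact hk.comp (ConcreteCategory.bijective_of_isIso (F.map e.hom)).1
  rw [F.map_comp, GrpCat.hom_comp, MonoidHom.coe_comp] at hcomp
  exact hcomp.of_comp

theorem kerIncl_pbHom_comp_fst {E H G : GrpCat.{u}} (p : E ⟶ G) (f : H ⟶ G) :
    kerIncl (pbHom p f) ≫ GrpCat.ofHom (pullbackFst p.hom f.hom) =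
      (pullbackProjKerEquiv p.hom f.hom).toGrpIso.hom ≫ kerIncl p :=
  rfl

/-- A right exact functor on the category of groups is conditionally flat: every pullback
of an `F`-flat extension is again `F`-flat. -/
theorem rightExact_conditionally_flat (F : GrpCat.{u} ⥤ GrpCat.{u}) (hF : GrpRightExact F)
    {E G : GrpCat.{u}} (p : E ⟶ G) (hp : Function.Surjective p.hom) (hflat : GrpFlat F p)
    {H : GrpCat.{u}} (f : H ⟶ G) :
    GrpFlat F (pbHom p f) := by
  obtain ⟨hsurj, hker⟩ := hF _ _ (pbHom p f) (pullbackProj_surjective p.hom f.hom hp)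
  exact ⟨injective_map_of_comp_eq_iso_comp F _ (kerIncl_pbHom_comp_fst p f) hflat.1, hsurj, hker⟩
end
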